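/- Let K be a finite index set (the energy blocks of a strategic electricity producer), n : K → N an assignment of each block to a network node, and real-valued functions α, P, Pmax, βmin, βmax on K together with prices β on N. Suppose for every k ∈ K: (i) stationarity holds, i.e. α(k) − β(n(k)) + βmax(k) − βmin(k) = 0; (ii) complementarity at the lower bound holds, i.e. P(k)·βmin(k) = 0; (iii) complementarity at the upper bound holds, i.e. (Pmax(k) − P(k))·βmax(k) = 0. Then the bilinear revenue term satisfies ∑_{k∈K} β(n(k))·P(k) = ∑_{k∈K} ( α(k)·P(k) + βmax(k)·Pmax(k) ). -/
import Mathlib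

/-- Linearization of the bilinear revenue term of a strategic electricity producer
via KKT stationarity and complementary slackness. -/
theorem electricity_bilinear_linearization
    {K N : Type*} [Fintype K] (n : K → N)
    (α P Pmax βmin βmax : K → ℝ) (β : N → ℝ)
    (stat : ∀ k, α k - β (n k) + βmax k - βmin k = 0)
    (compl_lo : ∀ k, P k * βmin k = 0)
    (compl_hi : ∀ k, (Pmax k - P k) * βmax k = 0) :
    ∑ k, β (n k) * P k = ∑ k, (α k * P k + βmax k * Pmax k) := by
  apply Finset.sum_congr rfl
  intro k _
  have h1 := stat k
  have h2 := compl_lo k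
  have h3 := compl_hi k
  linear_combination (-(P k)) * h1 - h2 - h3
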